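/- Let π be a permutation of {1,...,q} with peak set T, and suppose T contains neither i-1 nor i for some index 2 ≤ i ≤ q. Then the permutation of {1,...,q+1} obtained by inserting the value q+1 into position i has peak set exactly (the set of elements of T less than i) ∪ {i} ∪ (the set of elements t+1 for t ∈ T with t ≥ i). -/

import Mathlib

/-- The peak set (1-based indices) of a list: `i` is a peak if `1 < i < length`
and the `(i-1)`-st entry is less than the `i`-th, which is greater than the `(i+1)`-st. -/
def peaks (l : List ℕ) : Finset ℕ :=
  (Finset.Icc 2 (l.length - 1)).filter (fun i =>
    l.getD (i - 2) 0 < l.getD (i - 1) 0 ∧ l.getD i 0 < l.getD (i - 1) 0)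

/-- `l` is (the one-line notation of) a permutation of `{1,...,n}`. -/
def IsPermOf (n : ℕ) (l : List ℕ) : Prop := l.Perm (List.range' 1 n)

/-- The number of permutations of `{1,...,n}` with peak set exactly `S`. -/
noncomputable def numPerms (n : ℕ) (S : Finset ℕ) : ℕ :=
  {l : List ℕ | IsPermOf n l ∧ peaks l = S}.ncard

/-- `S` is `n`-admissible: some permutation of `{1,...,n}` has peak set exactly `S`. -/
def Admissible (n : ℕ) (S : Finset ℕ) : Prop :=
  ∃ l : List ℕ, IsPermOf n l ∧ peaks l = S

/-!
Since `q + 1` exceeds every entry of `π`, the inserted entry is a peak, and it kills any peak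
at the neighbouring positions `i - 1` and `i + 1`. Positions left of `i - 1` see the same three
entries as before, and positions right of `i + 1` see the entries of `π` one place to the left,
so the only old peaks that could be lost are those at `i - 1` and `i`.
-/

namespace List

variable {α : Type*} {l : List α} {x d : α} {i j : ℕ}

theorem getD_insertIdx_of_lt (h : j < i) : (l.insertIdx i x).getD j d = l.getD j d := by
  simp only [getD_eq_getElem?_getD, getElem?_insertIdx_of_lt h]

theorem getD_insertIdx_self (h : i ≤ l.length) : (l.insertIdx i x).getD i d = x := by
  simp only [getD_eq_getElem?_getD, getElem?_insertIdx_self, if_pos h, Option.getD_some]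

theorem getD_insertIdx_of_gt (h : i < j) : (l.insertIdx i x).getD j d = l.getD (j - 1) d := by
  simp only [getD_eq_getElem?_getD, getElem?_insertIdx_of_gt h]

theorem getD_lt_of_forall_mem_lt [LT α] (h : ∀ y ∈ l, y < x) (hj : j < l.length) :
    l.getD j d < x := by
  rw [getD_eq_getElem _ _ hj]
  exact h _ (getElem_mem hj)

end List

theorem mem_peaks {l : List ℕ} {k : ℕ} :
    k ∈ peaks l ↔ 2 ≤ k ∧ k < l.length ∧
      l.getD (k - 2) 0 < l.getD (k - 1) 0 ∧ l.getD k 0 < l.getD (k - 1) 0 := by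
  simp only [peaks, Finset.mem_filter, Finset.mem_Icc]
  constructor
  · rintro ⟨⟨hk2, hkl⟩, hpeak⟩
    exact ⟨hk2, by omega, hpeak⟩
  · rintro ⟨hk2, hkl, hpeak⟩
    exact ⟨⟨hk2, by omega⟩, hpeak⟩

section InsertIdx

variable {l : List ℕ} {m n k : ℕ}

theorem mem_peaks_insertIdx_of_lt (hn : n ≤ l.length) (hk : k < n) :
    k ∈ peaks (l.insertIdx n m) ↔ k ∈ peaks l := by
  rw [mem_peaks, mem_peaks, List.length_insertIdx_of_le_length hn,
    List.getD_insertIdx_of_lt (show k - 2 < n by omega),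
    List.getD_insertIdx_of_lt (show k - 1 < n by omega), List.getD_insertIdx_of_lt hk]
  constructor
  · rintro ⟨hk2, -, hpeak⟩
    exact ⟨hk2, by omega, hpeak⟩
  · rintro ⟨hk2, hkl, hpeak⟩
    exact ⟨hk2, by omega, hpeak⟩

theorem mem_peaks_insertIdx_of_gt (hn : n ≤ l.length) (hk : n + 2 < k) :
    k ∈ peaks (l.insertIdx n m) ↔ k - 1 ∈ peaks l := by
  rw [mem_peaks, mem_peaks, List.length_insertIdx_of_le_length hn,
    List.getD_insertIdx_of_gt (show n < k - 2 by omega),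
    List.getD_insertIdx_of_gt (show n < k - 1 by omega), List.getD_insertIdx_of_gt (by omega),
    show k - 2 - 1 = k - 1 - 2 by omega]
  constructor
  · rintro ⟨-, hkl, hpeak⟩
    exact ⟨by omega, by omega, hpeak⟩
  · rintro ⟨-, hkl, hpeak⟩
    exact ⟨by omega, by omega, hpeak⟩

variable (h : ∀ x ∈ l, x < m)
include h

theorem succ_mem_peaks_insertIdx (hn1 : 1 ≤ n) (hn : n < l.length) :
    n + 1 ∈ peaks (l.insertIdx n m) := by
  rw [mem_peaks, List.length_insertIdx_of_le_length hn.le, Nat.add_sub_cancel,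
    List.getD_insertIdx_of_lt (by omega), List.getD_insertIdx_self hn.le,
    List.getD_insertIdx_of_gt (by omega), Nat.add_sub_cancel]
  exact ⟨by omega, by omega, List.getD_lt_of_forall_mem_lt h (by omega),
    List.getD_lt_of_forall_mem_lt h hn⟩

theorem notMem_peaks_insertIdx (hn : n ≤ l.length) : n ∉ peaks (l.insertIdx n m) := by
  rw [mem_peaks, List.getD_insertIdx_self hn]
  rintro ⟨hn2, -, -, hpeak⟩
  rw [List.getD_insertIdx_of_lt (by omega)] at hpeak
  exact (List.getD_lt_of_forall_mem_lt h (by omega)).not_gt hpeak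

theorem add_two_notMem_peaks_insertIdx (hn : n < l.length) :
    n + 2 ∉ peaks (l.insertIdx n m) := by
  rw [mem_peaks, Nat.add_sub_cancel, show n + 2 - 1 = n + 1 by omega,
    List.getD_insertIdx_self hn.le, List.getD_insertIdx_of_gt (by omega), Nat.add_sub_cancel]
  rintro ⟨-, -, hpeak, -⟩
  exact (List.getD_lt_of_forall_mem_lt h hn).not_gt hpeak

theorem peaks_insertIdx_of_forall_lt {i : ℕ} (hi2 : 2 ≤ i) (hil : i ≤ l.length)
    (h1 : i - 1 ∉ peaks l) (h2 : i ∉ peaks l) :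
    peaks (l.insertIdx (i - 1) m) =
      (peaks l).filter (· < i) ∪ {i} ∪ ((peaks l).filter (i ≤ ·)).image (· + 1) := by
  obtain ⟨n, rfl⟩ : ∃ n, i = n + 1 := ⟨i - 1, by omega⟩
  rw [Nat.add_sub_cancel] at h1 ⊢
  ext k
  simp only [Finset.mem_union, Finset.mem_filter, Finset.mem_singleton, Finset.mem_image]
  rcases lt_trichotomy k n with hk | rfl | hk
  · rw [mem_peaks_insertIdx_of_lt (by omega) hk]
    constructor
    · exact fun hT => .inl (.inl ⟨hT, by omega⟩)
    · rintro ((⟨hT, -⟩ | rfl) | ⟨t, ⟨-, hit⟩, rfl⟩) <;> first | exact hT | omega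
  · refine iff_of_false (notMem_peaks_insertIdx h (by omega)) ?_
    rintro ((⟨hT, -⟩ | heq) | ⟨t, ⟨-, hit⟩, ht⟩)
    · exact h1 hT
    · omega
    · omega
  rcases lt_trichotomy k (n + 2) with hk' | rfl | hk'
  · obtain rfl : k = n + 1 := by omega
    exact iff_of_true (succ_mem_peaks_insertIdx h (by omega) (by omega)) (.inl (.inr rfl))
  · refine iff_of_false (add_two_notMem_peaks_insertIdx h (by omega)) ?_
    rintro ((⟨-, hlt⟩ | heq) | ⟨t, ⟨hT, -⟩, ht⟩)
    · omega
    · omega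
    · exact h2 (by rwa [show n + 1 = t by omega])
  · rw [mem_peaks_insertIdx_of_gt (by omega) hk']
    constructor
    · exact fun hT => .inr ⟨k - 1, ⟨hT, by omega⟩, by omega⟩
    · rintro ((⟨-, hlt⟩ | rfl) | ⟨t, ⟨hT, -⟩, rfl⟩)
      · omega
      · omega
      · simpa using hT

end InsertIdx

theorem stmt_11 (q : ℕ) (l : List ℕ) (hl : IsPermOf q l) (T : Finset ℕ)
    (hpk : peaks l = T) (i : ℕ) (hi2 : 2 ≤ i) (hiq : i ≤ q)
    (h1 : i - 1 ∉ T) (h2 : i ∉ T) :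
    peaks (l.insertIdx (i - 1) (q + 1)) =
      T.filter (· < i) ∪ {i} ∪ (T.filter (i ≤ ·)).image (· + 1) := by
  subst hpk
  have hlen : l.length = q := by simpa using hl.length_eq
  have hlt : ∀ x ∈ l, x < q + 1 := fun x hx => by
    have := List.mem_range'_1.1 (hl.mem_iff.1 hx)
    omega
  exact peaks_insertIdx_of_forall_lt hlt hi2 (hlen ▸ hiq) h1 h2
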